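/- arXiv:2509.09491 — 9 statements merged into one kernel-verified Lean document; each statement's English description precedes it below -/
import Mathlib

section
/- For all real d₁, d₂, setting Σ = e^{-d₁} + e^{d₁} + e^{-d₂} + e^{d₂}, one has (Σ - 4)·Σ - (e^{-d₁} - e^{d₁})² - (e^{-d₂} - e^{d₂})² ≥ 0. -/
theorem third_minor_key (d₁ d₂ : ℝ) :
    (Real.exp (-d₁) + Real.exp d₁ + Real.exp (-d₂) + Real.exp d₂ - 4) *
        (Real.exp (-d₁) + Real.exp d₁ + Real.exp (-d₂) + Real.exp d₂) -
      (Real.exp (-d₁) - Real.exp d₁) ^ 2 - (Real.exp (-d₂) - Real.exp d₂) ^ 2 ≥ 0 := by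
  have h1 : Real.exp (-d₁) * Real.exp d₁ = 1 := by rw [← Real.exp_add]; simp
  have h2 : Real.exp (-d₂) * Real.exp d₂ = 1 := by rw [← Real.exp_add]; simp
  have hx : Real.exp (-d₁) + Real.exp d₁ - 2 ≥ 0 := by
    nlinarith [sq_nonneg (Real.exp d₁ - 1), Real.exp_pos d₁]
  have hy : Real.exp (-d₂) + Real.exp d₂ - 2 ≥ 0 := by
    nlinarith [sq_nonneg (Real.exp d₂ - 1), Real.exp_pos d₂]
  nlinarith [mul_nonneg hx hy]
end

section
/- For all real d₁, d₂ and M, the 4×4 symmetric matrix (e^{-M}/4)·A, where A has diagonal entries (Σ-4, Σ-4, Σ, Σ) with Σ = e^{-d₁}+e^{d₁}+e^{-d₂}+e^{d₂}, entries A₁₃ = A₃₁ = e^{-d₁}-e^{d₁}, A₁₄ = A₄₁ = e^{-d₂}-e^{d₂}, A₂₃ = A₃₂ = e^{-d₂}-e^{d₂}, A₂₄ = A₄₂ = -(e^{-d₁}-e^{d₁}), and A₁₂ = A₂₁ = A₃₄ = A₄₃ = 0, is positive semidefinite. -/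
/-!
Writing `z = a + ib`, `w = c + id`, the quadratic form of the matrix
`!![α, 0, p, q; 0, α, q, -p; p, q, γ, 0; q, -p, 0, γ]` is `α|z|² + γ|w|² + 2 Re((p - iq) z w)`,
so it is nonnegative as soon as `α, γ ≥ 0` and `p² + q² ≤ αγ`. For the Bellman matrix
`α = Σ - 4`, `γ = Σ`, `p = -2 sinh d₁`, `q = -2 sinh d₂` with `Σ = 2 cosh d₁ + 2 cosh d₂`, and
`αγ - p² - q² = 8 (cosh d₁ - 1)(cosh d₂ - 1) ≥ 0`.
-/

open Real

theorem quadForm_nonneg_of_sq_add_sq_le {α γ p q : ℝ} (hα : 0 ≤ α) (hγ : 0 ≤ γ)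
    (h : p ^ 2 + q ^ 2 ≤ α * γ) (a b c d : ℝ) :
    0 ≤ α * (a ^ 2 + b ^ 2) + γ * (c ^ 2 + d ^ 2) + 2 * p * (a * c - b * d)
      + 2 * q * (a * d + b * c) := by
  rcases hα.eq_or_lt with rfl | hα
  · obtain ⟨rfl, rfl⟩ : p = 0 ∧ q = 0 := by
      constructor <;> nlinarith [sq_nonneg p, sq_nonneg q]
    simp only [zero_mul, mul_zero, add_zero, zero_add]
    positivity
  · refine nonneg_of_mul_nonneg_right ?_ hα
    have hdisc : 0 ≤ α * γ - p ^ 2 - q ^ 2 := by linarith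
    calc
      0 ≤ (α * a + p * c + q * d) ^ 2 + (α * b + q * c - p * d) ^ 2
          + (α * γ - p ^ 2 - q ^ 2) * (c ^ 2 + d ^ 2) := by positivity
      _ = α * (α * (a ^ 2 + b ^ 2) + γ * (c ^ 2 + d ^ 2) + 2 * p * (a * c - b * d)
          + 2 * q * (a * d + b * c)) := by ring

theorem Matrix.posSemidef_of_sq_add_sq_le {α γ p q : ℝ} (hα : 0 ≤ α) (hγ : 0 ≤ γ)
    (h : p ^ 2 + q ^ 2 ≤ α * γ) :
    (!![α, 0, p, q; 0, α, q, -p; p, q, γ, 0; q, -p, 0, γ] : Matrix (Fin 4) (Fin 4) ℝ).PosSemidef := by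
  rw [Matrix.posSemidef_iff_dotProduct_mulVec]
  refine ⟨?_, fun x => ?_⟩
  · ext i j
    fin_cases i <;> fin_cases j <;> rfl
  · refine (quadForm_nonneg_of_sq_add_sq_le hα hγ h (x 0) (x 1) (x 2) (x 3)).trans_eq ?_
    simp only [dotProduct, Pi.star_apply, star_trivial, Matrix.mulVec, Matrix.of_apply,
      Matrix.cons_val', Matrix.cons_val_fin_one, Fin.sum_univ_four, Matrix.cons_val_zero,
      Matrix.cons_val_one, Matrix.cons_val, zero_mul, add_zero, zero_add, neg_mul]
    ring

theorem Real.four_le_exp_neg_add_exp_add_exp_neg_add_exp (x y : ℝ) :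
    4 ≤ exp (-x) + exp x + exp (-y) + exp y := by
  linarith [add_one_le_exp x, add_one_le_exp (-x), add_one_le_exp y, add_one_le_exp (-y)]

theorem Real.sq_exp_neg_sub_exp_add_sq_le (x y : ℝ) :
    (exp (-x) - exp x) ^ 2 + (exp (-y) - exp y) ^ 2 ≤
      (exp (-x) + exp x + exp (-y) + exp y - 4) * (exp (-x) + exp x + exp (-y) + exp y) := by
  have hcx : exp (-x) + exp x = 2 * cosh x := by rw [cosh_eq]; ring
  have hcy : exp (-y) + exp y = 2 * cosh y := by rw [cosh_eq]; ring
  have hsx : exp (-x) - exp x = -(2 * sinh x) := by rw [sinh_eq]; ring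
  have hsy : exp (-y) - exp y = -(2 * sinh y) := by rw [sinh_eq]; ring
  rw [add_assoc (exp (-x) + exp x), hcx, hcy, hsx, hsy]
  nlinarith [cosh_sq x, cosh_sq y,
    mul_nonneg (sub_nonneg.2 (one_le_cosh x)) (sub_nonneg.2 (one_le_cosh y))]

open Real in
theorem bellman_hessian_posSemidef (d₁ d₂ M : ℝ) :
    Matrix.PosSemidef
      ((Real.exp (-M) / 4) •
        (!![exp (-d₁) + exp d₁ + exp (-d₂) + exp d₂ - 4, 0,
              exp (-d₁) - exp d₁, exp (-d₂) - exp d₂;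
            0, exp (-d₁) + exp d₁ + exp (-d₂) + exp d₂ - 4,
              exp (-d₂) - exp d₂, -(exp (-d₁) - exp d₁);
            exp (-d₁) - exp d₁, exp (-d₂) - exp d₂,
              exp (-d₁) + exp d₁ + exp (-d₂) + exp d₂, 0;
            exp (-d₂) - exp d₂, -(exp (-d₁) - exp d₁), 0,
              exp (-d₁) + exp d₁ + exp (-d₂) + exp d₂] :
          Matrix (Fin 4) (Fin 4) ℝ)) := by
  have hsum := four_le_exp_neg_add_exp_add_exp_neg_add_exp d₁ d₂
  refine (Matrix.posSemidef_of_sq_add_sq_le ?_ ?_ (sq_exp_neg_sub_exp_add_sq_le d₁ d₂)).smul ?_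
  · linarith
  · linarith
  · positivity
end

section
/- The determinant of the 4×4 matrix with diagonal (Σ-4, Σ-4, Σ, Σ), where Σ = e^{-d₁}+e^{d₁}+e^{-d₂}+e^{d₂}, off-diagonal entries A₁₃ = A₃₁ = e^{-d₁}-e^{d₁}, A₁₄ = A₄₁ = A₂₃ = A₃₂ = e^{-d₂}-e^{d₂}, A₂₄ = A₄₂ = e^{d₁}-e^{-d₁}, and A₁₂ = A₂₁ = A₃₄ = A₄₃ = 0, equals 4·(e^{d₁/2}-e^{-d₁/2})⁴·(e^{d₂/2}-e^{-d₂/2})⁴. -/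
/-!
Write `a = e^{-d₁} - e^{d₁}`, `b = e^{-d₂} - e^{d₂}` and `pᵢ = e^{-dᵢ} + e^{dᵢ}`, so that
`Σ = p₁ + p₂`, `a² = p₁² - 4` and `b² = p₂² - 4`. The matrix has the block form `[(Σ - 4) I, M; Mᵀ, Σ I]` with
`M = [a, b; b, -a]` and `M Mᵀ = (a² + b²) I`, so its determinant is `((Σ - 4) Σ - a² - b²)²`.
The middle factor collapses to `2 (p₁ - 2)(p₂ - 2)`, and `pᵢ - 2 = (e^{dᵢ/2} - e^{-dᵢ/2})²`.
-/

open Real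

theorem Matrix.det_fin_four_scalar_reflection_block {R : Type*} [CommRing R] (a b s t : R) :
    (!![s, 0, a, b; 0, s, b, -a; a, b, t, 0; b, -a, 0, t] : Matrix (Fin 4) (Fin 4) R).det
      = (s * t - (a ^ 2 + b ^ 2)) ^ 2 := by
  simp [Matrix.det_succ_row_zero, Fin.sum_univ_succ, Fin.succAbove]
  ring

theorem Real.sq_exp_neg_sub_exp (x : ℝ) :
    (exp (-x) - exp x) ^ 2 = (exp (-x) + exp x) ^ 2 - 4 := by
  have h : exp (-x) * exp x = 1 := by rw [← exp_add, neg_add_cancel, exp_zero]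
  linear_combination (-4) * h

theorem Real.exp_neg_add_exp_sub_two (x : ℝ) :
    exp (-x) + exp x - 2 = (exp (x / 2) - exp (-(x / 2))) ^ 2 := by
  have h₁ : exp (x / 2) ^ 2 = exp x := by rw [sq, ← exp_add, add_halves]
  have h₂ : exp (-(x / 2)) ^ 2 = exp (-x) := by rw [sq, ← exp_add]; ring_nf
  have h₃ : exp (x / 2) * exp (-(x / 2)) = 1 := by rw [← exp_add, add_neg_cancel, exp_zero]
  linear_combination -h₁ - h₂ + 2 * h₃

open Real in
theorem bellman_hessian_det (d₁ d₂ : ℝ) :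
    (!![exp (-d₁) + exp d₁ + exp (-d₂) + exp d₂ - 4, 0,
          exp (-d₁) - exp d₁, exp (-d₂) - exp d₂;
        0, exp (-d₁) + exp d₁ + exp (-d₂) + exp d₂ - 4,
          exp (-d₂) - exp d₂, exp d₁ - exp (-d₁);
        exp (-d₁) - exp d₁, exp (-d₂) - exp d₂,
          exp (-d₁) + exp d₁ + exp (-d₂) + exp d₂, 0;
        exp (-d₂) - exp d₂, exp d₁ - exp (-d₁), 0,
          exp (-d₁) + exp d₁ + exp (-d₂) + exp d₂] :
      Matrix (Fin 4) (Fin 4) ℝ).det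
      = 4 * (exp (d₁ / 2) - exp (-(d₁ / 2))) ^ 4 * (exp (d₂ / 2) - exp (-(d₂ / 2))) ^ 4 := by
  have factor (p q : ℝ) :
      ((p + q - 4) * (p + q) - ((p ^ 2 - 4) + (q ^ 2 - 4))) ^ 2 = 4 * ((p - 2) * (q - 2)) ^ 2 := by
    ring
  rw [← neg_sub (exp (-d₁)) (exp d₁), Matrix.det_fin_four_scalar_reflection_block,
    add_assoc (exp (-d₁) + exp d₁), sq_exp_neg_sub_exp, sq_exp_neg_sub_exp,
    factor, exp_neg_add_exp_sub_two, exp_neg_add_exp_sub_two]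
  ring
end

section
/- Let r, i, Δxr, Δyr, M, d₁, d₂ be real numbers. Then e^{-M}(r²+i²) ≤ (1/4)e^{-(M+d₁)}((r+Δxr)² + (i-Δyr)²) + (1/4)e^{-(M-d₁)}((r-Δxr)² + (i+Δyr)²) + (1/4)e^{-(M+d₂)}((r+Δyr)² + (i+Δxr)²) + (1/4)e^{-(M-d₂)}((r-Δyr)² + (i-Δxr)²). -/
/-!
Put `z = r + i·I` and `c = Δxr - Δyr·I`; the four squared norms on the right are `‖z ± c‖²` and
`‖z ± I c‖²`, and after factoring out `e^{-M}` their weights are `e^{∓d₁}/4` and `e^{∓d₂}/4`.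
Weighted AM-GM bounds each pair from below by `2‖z² - c²‖` resp. `2‖z² + c²‖`, and the
triangle inequality for `(z² - c²) + (z² + c²) = 2z²` bounds the sum of these by `4‖z‖²`.
-/

open Complex

theorem two_mul_mul_le_mul_sq_add_inv_mul_sq {a : ℝ} (ha : 0 < a) (x y : ℝ) :
    2 * x * y ≤ a * x ^ 2 + a⁻¹ * y ^ 2 := by
  have key : a * x ^ 2 + a⁻¹ * y ^ 2 - 2 * x * y = a⁻¹ * (a * x - y) ^ 2 := by
    field_simp
    ring
  linarith [mul_nonneg (inv_nonneg.2 ha.le) (sq_nonneg (a * x - y))]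

theorem Complex.two_mul_sq_norm_le (z c : ℂ) :
    2 * ‖z‖ ^ 2 ≤ ‖z + c‖ * ‖z - c‖ + ‖z + I * c‖ * ‖z - I * c‖ := by
  have hsum : (z + c) * (z - c) + (z + I * c) * (z - I * c) = 2 * z ^ 2 := by
    linear_combination (-c ^ 2) * I_sq
  calc 2 * ‖z‖ ^ 2 = ‖(z + c) * (z - c) + (z + I * c) * (z - I * c)‖ := by
        rw [hsum, norm_mul, norm_pow, Complex.norm_two]
    _ ≤ _ := by
        simpa only [norm_mul] using norm_add_le ((z + c) * (z - c)) ((z + I * c) * (z - I * c))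

theorem Complex.sq_norm_le_weighted_sum {a b : ℝ} (ha : 0 < a) (hb : 0 < b) (z c : ℂ) :
    ‖z‖ ^ 2 ≤ (a * ‖z + c‖ ^ 2 + a⁻¹ * ‖z - c‖ ^ 2
      + b * ‖z + I * c‖ ^ 2 + b⁻¹ * ‖z - I * c‖ ^ 2) / 4 := by
  linarith [two_mul_sq_norm_le z c, two_mul_mul_le_mul_sq_add_inv_mul_sq ha ‖z + c‖ ‖z - c‖,
    two_mul_mul_le_mul_sq_add_inv_mul_sq hb ‖z + I * c‖ ‖z - I * c‖]

theorem Complex.sq_norm_mk (x y : ℝ) : ‖(⟨x, y⟩ : ℂ)‖ ^ 2 = x ^ 2 + y ^ 2 := by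
  rw [Complex.sq_norm, normSq_mk]
  ring

theorem Real.exp_neg_sub (x y : ℝ) : Real.exp (-(x - y)) = Real.exp (-x) * (Real.exp (-y))⁻¹ := by
  rw [← Real.exp_neg, ← Real.exp_add]
  ring_nf

theorem restricted_concavity (r i Δxr Δyr M d₁ d₂ : ℝ) :
    Real.exp (-M) * (r ^ 2 + i ^ 2) ≤
      (1 / 4) * Real.exp (-(M + d₁)) * ((r + Δxr) ^ 2 + (i - Δyr) ^ 2) +
      (1 / 4) * Real.exp (-(M - d₁)) * ((r - Δxr) ^ 2 + (i + Δyr) ^ 2) +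
      (1 / 4) * Real.exp (-(M + d₂)) * ((r + Δyr) ^ 2 + (i + Δxr) ^ 2) +
      (1 / 4) * Real.exp (-(M - d₂)) * ((r - Δyr) ^ 2 + (i - Δxr) ^ 2) := by
  have h := sq_norm_le_weighted_sum (Real.exp_pos (-d₁)) (Real.exp_pos (-d₂))
    ⟨r, i⟩ ⟨Δxr, -Δyr⟩
  have e₁ : (⟨r, i⟩ + ⟨Δxr, -Δyr⟩ : ℂ) = ⟨r + Δxr, i - Δyr⟩ := by
    apply Complex.ext <;> simp [sub_eq_add_neg]
  have e₂ : (⟨r, i⟩ - ⟨Δxr, -Δyr⟩ : ℂ) = ⟨r - Δxr, i + Δyr⟩ := by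
    apply Complex.ext <;> simp
  have e₃ : (⟨r, i⟩ + I * ⟨Δxr, -Δyr⟩ : ℂ) = ⟨r + Δyr, i + Δxr⟩ := by
    apply Complex.ext <;> simp
  have e₄ : (⟨r, i⟩ - I * ⟨Δxr, -Δyr⟩ : ℂ) = ⟨r - Δyr, i - Δxr⟩ := by
    apply Complex.ext <;> simp
  simp only [e₁, e₂, e₃, e₄, sq_norm_mk] at h
  rw [Real.exp_neg_sub, Real.exp_neg_sub, neg_add, Real.exp_add, neg_add, Real.exp_add]
  linear_combination mul_le_mul_of_nonneg_left h (Real.exp_pos (-M)).le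
end

section
/- Let Φ : [0,1] → ℝ be twice differentiable with Φ > 0 on [0,1], Φ' ≤ -1 on [0,1], and Φ''·Φ - (Φ')² ≥ 0 on [0,1] (i.e., log Φ is convex). Then Φ(0) ≥ e^{log Φ(1) + 1/Φ(1)}, and consequently Φ(0) ≥ e. -/
theorem optimality_phi_lower_bound (Φ : ℝ → ℝ)
    (hsmooth : ContDiff ℝ 2 Φ)
    (hpos : ∀ M ∈ Set.Icc (0 : ℝ) 1, 0 < Φ M)
    (hderiv : ∀ M ∈ Set.Icc (0 : ℝ) 1, deriv Φ M ≤ -1)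
    (hlogconv : ∀ M ∈ Set.Icc (0 : ℝ) 1, deriv (deriv Φ) M * Φ M - (deriv Φ M) ^ 2 ≥ 0) :
    Φ 0 ≥ Real.exp 1 * Φ 1 * Real.exp (1 / Φ 1 - 1) ∧
    Φ 0 ≥ Real.exp (Real.log (Φ 1) + 1 / Φ 1) ∧
    Φ 0 ≥ Real.exp 1 := by
  have h1 : (0:ℝ) < Φ 1 := hpos 1 ⟨zero_le_one, le_refl 1⟩
  have h0 : (0:ℝ) < Φ 0 := hpos 0 ⟨le_refl 0, zero_le_one⟩
  have hdiff : Differentiable ℝ Φ := hsmooth.differentiable (by norm_num)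
  have hd1 : ContDiff ℝ 1 (deriv Φ) := by
    have hs : ContDiff ℝ (1+1) Φ := by exact_mod_cast hsmooth
    exact (contDiff_succ_iff_deriv.mp hs).2.2
  have hdiffd : Differentiable ℝ (deriv Φ) := hd1.differentiable one_ne_zero
  -- the function u = Φ'/Φ
  set u : ℝ → ℝ := fun x => deriv Φ x / Φ x with hu
  have hucont : ContinuousOn u (Set.Icc 0 1) :=
    ((hsmooth.continuous_deriv (by norm_num)).continuousOn).div hdiff.continuous.continuousOn
      (fun x hx => (hpos x hx).ne')
  have huderiv : ∀ x ∈ Set.Ioo (0:ℝ) 1, HasDerivAt u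
      ((deriv (deriv Φ) x * Φ x - deriv Φ x * deriv Φ x) / (Φ x)^2) x := by
    intro x hx
    exact ((hdiffd x).hasDerivAt).div ((hdiff x).hasDerivAt)
      (hpos x (Set.mem_Icc_of_Ioo hx)).ne'
  have humono : MonotoneOn u (Set.Icc 0 1) := by
    apply monotoneOn_of_deriv_nonneg (convex_Icc 0 1) hucont
    · intro x hx
      rw [interior_Icc] at hx
      exact (huderiv x hx).differentiableAt.differentiableWithinAt
    · intro x hx
      rw [interior_Icc] at hx
      rw [(huderiv x hx).deriv]
      apply div_nonneg _ (sq_nonneg _)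
      have := hlogconv x (Set.mem_Icc_of_Ioo hx)
      nlinarith
  -- log Φ
  set Υ : ℝ → ℝ := fun x => Real.log (Φ x) with hY
  have hYderiv : ∀ x ∈ Set.Icc (0:ℝ) 1, HasDerivAt Υ (u x) x := by
    intro x hx
    exact ((hdiff x).hasDerivAt).log (hpos x hx).ne'
  obtain ⟨c, hc, hceq⟩ := exists_hasDerivAt_eq_slope Υ u (by norm_num)
    (fun x hx => (hYderiv x hx).continuousAt.continuousWithinAt)
    (fun x hx => hYderiv x (Set.mem_Icc_of_Ioo hx))
  have hc1 : u c ≤ u 1 := humono (Set.mem_Icc_of_Ioo hc) ⟨zero_le_one, le_refl 1⟩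
    hc.2.le
  have hu1 : u 1 ≤ -1 / Φ 1 := by
    exact (div_le_div_iff_of_pos_right h1).mpr (hderiv 1 ⟨zero_le_one, le_refl 1⟩)
  have key : Real.log (Φ 1) + 1 / Φ 1 ≤ Real.log (Φ 0) := by
    have : (Υ 1 - Υ 0) / (1 - 0) ≤ -1 / Φ 1 := hceq ▸ (hc1.trans hu1)
    simp only [hY] at this ⊢
    have h := this
    rw [sub_zero, div_one] at h
    have : -1 / Φ 1 = -(1 / Φ 1) := by ring
    linarith [h.trans_eq this]
  have key2 : Φ 0 ≥ Real.exp (Real.log (Φ 1) + 1 / Φ 1) := by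
    calc Real.exp (Real.log (Φ 1) + 1 / Φ 1) ≤ Real.exp (Real.log (Φ 0)) :=
          Real.exp_le_exp.mpr key
      _ = Φ 0 := Real.exp_log h0
  have heq : Real.exp 1 * Φ 1 * Real.exp (1 / Φ 1 - 1) = Real.exp (Real.log (Φ 1) + 1 / Φ 1) := by
    rw [Real.exp_add, Real.exp_log h1,
      show Real.exp 1 * Φ 1 * Real.exp (1 / Φ 1 - 1)
        = Φ 1 * (Real.exp (1 / Φ 1 - 1) * Real.exp 1) from by ring, ← Real.exp_add]
    norm_num
  refine ⟨heq ▸ key2, key2, key2.trans' ?_⟩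
  apply Real.exp_le_exp.mpr
  have := Real.log_le_sub_one_of_pos (one_div_pos.mpr h1)
  rw [Real.log_div one_ne_zero h1.ne', Real.log_one] at this
  linarith
end

section
/- For any smooth function Φ : (0,1) → ℝ with Φ > 0, the 4×4 symmetric matrix with diagonal ((r²+i²)Φ''(M), (r²+i²)Φ''(M), 4Φ(M), 4Φ(M)), entries (1,3) = (3,1) = 2rΦ'(M), (1,4) = (4,1) = -2iΦ'(M), (2,3) = (3,2) = 2iΦ'(M), (2,4) = (4,2) = 2rΦ'(M), and zeros elsewhere, is positive semidefinite for all real r, i (not both zero) if and only if Φ(M) ≥ 0 and Φ''(M)Φ(M) - Φ'(M)² ≥ 0. -/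
theorem limiting_hessian_posSemidef_iff (Φ : ℝ → ℝ) (M : ℝ) (hM : M ∈ Set.Ioo (0 : ℝ) 1)
    (hsmooth : ContDiff ℝ (⊤ : ℕ∞) Φ) (hpos : ∀ x ∈ Set.Ioo (0 : ℝ) 1, 0 < Φ x) :
    (∀ r i : ℝ, ¬(r = 0 ∧ i = 0) →
      Matrix.PosSemidef
        (!![(r ^ 2 + i ^ 2) * deriv (deriv Φ) M, 0, 2 * r * deriv Φ M, -2 * i * deriv Φ M;
            0, (r ^ 2 + i ^ 2) * deriv (deriv Φ) M, 2 * i * deriv Φ M, 2 * r * deriv Φ M;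
            2 * r * deriv Φ M, 2 * i * deriv Φ M, 4 * Φ M, 0;
            -2 * i * deriv Φ M, 2 * r * deriv Φ M, 0, 4 * Φ M] :
          Matrix (Fin 4) (Fin 4) ℝ)) ↔
    (0 ≤ Φ M ∧ deriv (deriv Φ) M * Φ M - (deriv Φ M) ^ 2 ≥ 0) := by
  have hΦ : 0 < Φ M := hpos M hM
  set A := deriv (deriv Φ) M with hA
  set B := deriv Φ M with hB
  constructor
  · intro h
    refine ⟨hΦ.le, ?_⟩
    have h1 := (Matrix.posSemidef_iff_dotProduct_mulVec.mp (h 1 0 (by simp))).2 ![2 * Φ M, 0, -B, 0]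
    simp [Matrix.mulVec, dotProduct, Fin.sum_univ_four] at h1
    nlinarith [h1, hΦ]
  · rintro ⟨-, h2⟩ r i hri
    rw [Matrix.posSemidef_iff_dotProduct_mulVec]
    constructor
    · ext j k
      fin_cases j <;> fin_cases k <;>
        simp [Matrix.conjTranspose_apply]
    · intro x
      simp [Matrix.mulVec, dotProduct, Fin.sum_univ_four]
      nlinarith [sq_nonneg (2 * B * (r * x 0 + i * x 1) + 4 * Φ M * x 2),
        sq_nonneg (2 * B * (r * x 1 - i * x 0) + 4 * Φ M * x 3),
        mul_nonneg h2 (sq_nonneg (r * x 0 + i * x 1)),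
        mul_nonneg h2 (sq_nonneg (r * x 1 - i * x 0)), hΦ]
end

section
/- Let M, μ, u, v be real with μ ≥ 0 and M ≤ 0, and let u_σ^⋆, v_σ^⋆ (σ ∈ {+,-}, ⋆ ∈ {x,y}) satisfy the dyadic Cauchy–Riemann increments u^x_± = u ± a, u^y_± = u ± b, v^x_± = v ∓ b, v^y_± = v ± a for some reals a, b, and let M^x_± = M + μ ± d₁, M^y_± = M + μ ± d₂. Then (1/4)∑_{⋆,σ} e^{M^⋆_σ}((u^⋆_σ)² + (v^⋆_σ)²) - e^{M}(u²+v²) ≥ μ·e^{M}(u²+v²). -/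
set_option maxHeartbeats 1000000

private lemma amgm_exp (d P Q : ℝ) (hP : 0 ≤ P) (hQ : 0 ≤ Q) :
    2 * Real.sqrt (P * Q) ≤ Real.exp d * P + Real.exp (-d) * Q := by
  set x := Real.sqrt (Real.exp d * P) with hx
  set y := Real.sqrt (Real.exp (-d) * Q) with hy
  have h1 : 0 ≤ Real.exp d * P := mul_nonneg (Real.exp_pos d).le hP
  have h2 : 0 ≤ Real.exp (-d) * Q := mul_nonneg (Real.exp_pos _).le hQ
  have hxy : x * y = Real.sqrt (P * Q) := by
    rw [hx, hy, ← Real.sqrt_mul h1]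
    congr 1
    rw [Real.exp_neg]
    field_simp
  have hx2 : x ^ 2 = Real.exp d * P := Real.sq_sqrt h1
  have hy2 : y ^ 2 = Real.exp (-d) * Q := Real.sq_sqrt h2
  nlinarith [sq_nonneg (x - y)]

private lemma triangle_sqrt (A B C D : ℝ) :
    Real.sqrt ((A + C) ^ 2 + (B + D) ^ 2) ≤
      Real.sqrt (A ^ 2 + B ^ 2) + Real.sqrt (C ^ 2 + D ^ 2) := by
  set s := Real.sqrt (A ^ 2 + B ^ 2) with hs
  set t := Real.sqrt (C ^ 2 + D ^ 2) with ht
  have hs0 : 0 ≤ s := Real.sqrt_nonneg _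
  have ht0 : 0 ≤ t := Real.sqrt_nonneg _
  have hs2 : s ^ 2 = A ^ 2 + B ^ 2 := Real.sq_sqrt (by positivity)
  have ht2 : t ^ 2 = C ^ 2 + D ^ 2 := Real.sq_sqrt (by positivity)
  have hst : A * C + B * D ≤ s * t := by
    nlinarith [sq_nonneg (A * D - B * C), mul_nonneg hs0 ht0, sq_nonneg (s * t - A * C - B * D)]
  have h : (A + C) ^ 2 + (B + D) ^ 2 ≤ (s + t) ^ 2 := by nlinarith
  calc Real.sqrt ((A + C) ^ 2 + (B + D) ^ 2) ≤ Real.sqrt ((s + t) ^ 2) :=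
        Real.sqrt_le_sqrt h
    _ = s + t := Real.sqrt_sq (by positivity)

theorem dyadic_subharmonicity (M μ u v a b d₁ d₂ : ℝ) (hμ : 0 ≤ μ) (hM : M ≤ 0) :
    (1 / 4) * (Real.exp (M + μ + d₁) * ((u + a) ^ 2 + (v - b) ^ 2) +
        Real.exp (M + μ - d₁) * ((u - a) ^ 2 + (v + b) ^ 2) +
        Real.exp (M + μ + d₂) * ((u + b) ^ 2 + (v + a) ^ 2) +
        Real.exp (M + μ - d₂) * ((u - b) ^ 2 + (v - a) ^ 2)) -
      Real.exp M * (u ^ 2 + v ^ 2) ≥ μ * Real.exp M * (u ^ 2 + v ^ 2) := by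
  set P₁ := (u + a) ^ 2 + (v - b) ^ 2 with hP₁
  set P₂ := (u - a) ^ 2 + (v + b) ^ 2 with hP₂
  set P₃ := (u + b) ^ 2 + (v + a) ^ 2 with hP₃
  set P₄ := (u - b) ^ 2 + (v - a) ^ 2 with hP₄
  have hP1 : 0 ≤ P₁ := by positivity
  have hP2 : 0 ≤ P₂ := by positivity
  have hP3 : 0 ≤ P₃ := by positivity
  have hP4 : 0 ≤ P₄ := by positivity
  -- geometric means as complex moduli
  have e12 : P₁ * P₂ = (u ^ 2 - v ^ 2 - a ^ 2 + b ^ 2) ^ 2 + (2 * u * v + 2 * a * b) ^ 2 := by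
    rw [hP₁, hP₂]; ring
  have e34 : P₃ * P₄ = (u ^ 2 - v ^ 2 + a ^ 2 - b ^ 2) ^ 2 + (2 * u * v - 2 * a * b) ^ 2 := by
    rw [hP₃, hP₄]; ring
  have key : 2 * (u ^ 2 + v ^ 2) ≤ Real.sqrt (P₁ * P₂) + Real.sqrt (P₃ * P₄) := by
    rw [e12, e34]
    have h := triangle_sqrt (u ^ 2 - v ^ 2 - a ^ 2 + b ^ 2) (2 * u * v + 2 * a * b)
      (u ^ 2 - v ^ 2 + a ^ 2 - b ^ 2) (2 * u * v - 2 * a * b)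
    have heq : ((u ^ 2 - v ^ 2 - a ^ 2 + b ^ 2) + (u ^ 2 - v ^ 2 + a ^ 2 - b ^ 2)) ^ 2 +
        ((2 * u * v + 2 * a * b) + (2 * u * v - 2 * a * b)) ^ 2 =
        (2 * (u ^ 2 + v ^ 2)) ^ 2 := by ring
    rw [heq, Real.sqrt_sq (by positivity)] at h
    exact h
  -- AM-GM on each pair
  have ha1 : 2 * Real.sqrt (P₁ * P₂) ≤ Real.exp d₁ * P₁ + Real.exp (-d₁) * P₂ :=
    amgm_exp d₁ P₁ P₂ hP1 hP2
  have ha2 : 2 * Real.sqrt (P₃ * P₄) ≤ Real.exp d₂ * P₃ + Real.exp (-d₂) * P₄ :=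
    amgm_exp d₂ P₃ P₄ hP3 hP4
  have hsum : 4 * (u ^ 2 + v ^ 2) ≤
      Real.exp d₁ * P₁ + Real.exp (-d₁) * P₂ + Real.exp d₂ * P₃ + Real.exp (-d₂) * P₄ := by
    nlinarith [key, ha1, ha2]
  have hrw1 : Real.exp (M + μ + d₁) = Real.exp (M + μ) * Real.exp d₁ := by
    rw [← Real.exp_add]
  have hrw2 : Real.exp (M + μ - d₁) = Real.exp (M + μ) * Real.exp (-d₁) := by
    rw [← Real.exp_add]; ring_nf
  have hrw3 : Real.exp (M + μ + d₂) = Real.exp (M + μ) * Real.exp d₂ := by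
    rw [← Real.exp_add]
  have hrw4 : Real.exp (M + μ - d₂) = Real.exp (M + μ) * Real.exp (-d₂) := by
    rw [← Real.exp_add]; ring_nf
  have hBig : Real.exp (M + μ) * (u ^ 2 + v ^ 2) ≤
      (1 / 4) * (Real.exp (M + μ + d₁) * P₁ + Real.exp (M + μ - d₁) * P₂ +
        Real.exp (M + μ + d₂) * P₃ + Real.exp (M + μ - d₂) * P₄) := by
    rw [hrw1, hrw2, hrw3, hrw4]
    have hpos : 0 < Real.exp (M + μ) := Real.exp_pos _
    have h := mul_le_mul_of_nonneg_left hsum hpos.le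
    ring_nf at h ⊢
    linarith
  -- exp μ ≥ 1 + μ
  have hexp : (1 + μ) * Real.exp M ≤ Real.exp (M + μ) := by
    rw [Real.exp_add]
    have := Real.add_one_le_exp μ
    nlinarith [Real.exp_pos M]
  have hT : 0 ≤ u ^ 2 + v ^ 2 := by positivity
  have h2 := mul_le_mul_of_nonneg_right hexp hT
  ring_nf at h2 hBig ⊢
  linarith
end

section
/- The dyadic analytic projection P⁺_dy = (1/2)(Id + i·S₀) on Haar functions over odd dyadic intervals (and identity on constants) satisfies P⁺_dy f = f for every f = u + iv in the dyadic Hardy space H²_dy, i.e., for every pair (u,v) of sliced dyadic L² martingales satisfying the dyadic Cauchy–Riemann equations with v₀ = 0. -/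
/-- The Haar-coefficient action of the rotation operator `S₀ h_{I±} = ±h_{I∓}`:
for a function `c` of Haar coefficients (indexed by dyadic intervals encoded as
lists of booleans, only coefficients at odd intervals being relevant),
`(S₀ c)(I₋) = c(I₊)` and `(S₀ c)(I₊) = -c(I₋)`. -/
def S0coeff (c : List Bool → ℂ) : List Bool → ℂ := fun J =>
  match J.getLast? with
  | some false => c (J.dropLast ++ [true])
  | some true => -c (J.dropLast ++ [false])
  | none => 0

/-- The dyadic analytic projection `P⁺_dy = ½(Id + i S₀)` fixes every `f = u + iv` in the
dyadic Hardy space: if the Haar coefficients `a, b` of the sliced martingales `u, v`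
(supported on odd dyadic intervals, children of 4-adic intervals `I`) satisfy the dyadic
Cauchy–Riemann relations `-⟨u,h_{I₋}⟩ = ⟨v,h_{I₊}⟩` and `⟨u,h_{I₊}⟩ = ⟨v,h_{I₋}⟩`, then
the Haar coefficients `c = a + i·b` of `f` satisfy `½(c_J + i·(S₀c)_J) = c_J` at every
odd interval `J`. -/
theorem dyadic_analytic_projection_fixes (a b : List Bool → ℝ)
    (hCR : ∀ I : List Bool, Even I.length →
      -a (I ++ [false]) = b (I ++ [true]) ∧ a (I ++ [true]) = b (I ++ [false])) :
    ∀ I : List Bool, Even I.length → ∀ s : Bool,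
      (1 / 2 : ℂ) * (((a (I ++ [s]) : ℂ) + Complex.I * (b (I ++ [s]) : ℂ)) +
          Complex.I * S0coeff (fun J => (a J : ℂ) + Complex.I * (b J : ℂ)) (I ++ [s])) =
        (a (I ++ [s]) : ℂ) + Complex.I * (b (I ++ [s]) : ℂ) := by
  intro I hI s
  obtain ⟨h1, h2⟩ := hCR I hI
  have hlast : (I ++ [s]).getLast? = some s := by simp
  have hdrop : (I ++ [s]).dropLast = I := by simp
  cases s <;>
    simp only [S0coeff, hlast, hdrop] <;>
    rw [← h1, ← h2] <;>
    push_cast <;>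
    ring_nf <;>
    rw [Complex.I_sq] <;>
    ring
end

section
/- There exist real numbers M ∈ [0,1], d near 0, d₁ = 0, d₂ = 1/2 - d with d, d+d₁, d+d₂ within the admissible range (all of M±d±dᵢ in [0,1]), such that the third principal minor (Σ-4)·[(Σ-4)Σ - (e^{-d-d₁}-e^{-d+d₁})² - (e^{d-d₂}-e^{d+d₂})²], where Σ = e^{-d}(e^{-d₁}+e^{d₁}) + e^{d}(e^{-d₂}+e^{d₂}), is strictly negative. -/
open Real
theorem aux (x : ℝ) (hx0 : 0 < x) (hl : (1.05126:ℝ) ≤ x) (hu : x ≤ (1.05128:ℝ)) :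
    ((x⁻¹ * (1 + 1) + x * ((x ^ 9)⁻¹ + x ^ 9)) - 4) *
      (((x⁻¹ * (1 + 1) + x * ((x ^ 9)⁻¹ + x ^ 9)) - 4) *
          (x⁻¹ * (1 + 1) + x * ((x ^ 9)⁻¹ + x ^ 9)) -
        (x⁻¹ - x⁻¹) ^ 2 - ((x ^ 8)⁻¹ - x ^ 10) ^ 2) < 0 := by
  have hxne : x ≠ 0 := ne_of_gt hx0
  have hS : -x^19 + x^18 + x^11 - 2*x^8 + x^7 - x + 1 < 0 := by
    nlinarith [pow_le_pow_left₀ (by norm_num : (0:ℝ) ≤ 1.05126) hl 19,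
      pow_le_pow_left₀ hx0.le hu 18, pow_le_pow_left₀ hx0.le hu 11,
      pow_le_pow_left₀ (by norm_num : (0:ℝ) ≤ 1.05126) hl 8,
      pow_le_pow_left₀ hx0.le hu 7, hl]
  have hP : (0:ℝ) < x^18 - 4*x^8 + 2*x^7 + 1 := by
    nlinarith [pow_le_pow_left₀ (by norm_num : (0:ℝ) ≤ 1.05126) hl 18,
      pow_le_pow_left₀ hx0.le hu 8,
      pow_le_pow_left₀ (by norm_num : (0:ℝ) ≤ 1.05126) hl 7]
  have key : ((x⁻¹ * (1 + 1) + x * ((x ^ 9)⁻¹ + x ^ 9)) - 4) *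
      (((x⁻¹ * (1 + 1) + x * ((x ^ 9)⁻¹ + x ^ 9)) - 4) *
          (x⁻¹ * (1 + 1) + x * ((x ^ 9)⁻¹ + x ^ 9)) -
        (x⁻¹ - x⁻¹) ^ 2 - ((x ^ 8)⁻¹ - x ^ 10) ^ 2) * x ^ 24
      = (x^18 - 4*x^8 + 2*x^7 + 1) *
          (4 * x^7 * (-x^19 + x^18 + x^11 - 2*x^8 + x^7 - x + 1)) := by
    field_simp
    ring
  have h24 : (0:ℝ) < x ^ 24 := pow_pos hx0 24
  have hSS : 4 * x^7 * (-x^19 + x^18 + x^11 - 2*x^8 + x^7 - x + 1) < 0 := by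
    have h7 : (0:ℝ) < 4 * x^7 := by positivity
    exact mul_neg_of_pos_of_neg h7 hS
  have hneg := key ▸ mul_neg_of_pos_of_neg hP hSS
  by_contra h
  push_neg at h
  exact absurd (key ▸ (mul_neg_of_pos_of_neg hP hSS)) (not_lt.mpr (mul_nonneg h h24.le))
open Real in
theorem third_minor_fails_without_slicing :
    ∃ M d d₁ d₂ : ℝ,
      d₁ = 0 ∧ d₂ = 1 / 2 - d ∧
      (0 ≤ M ∧ M ≤ 1) ∧
      (0 ≤ M + d + d₁ ∧ M + d + d₁ ≤ 1) ∧
      (0 ≤ M + d - d₁ ∧ M + d - d₁ ≤ 1) ∧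
      (0 ≤ M - d + d₂ ∧ M - d + d₂ ≤ 1) ∧
      (0 ≤ M - d - d₂ ∧ M - d - d₂ ≤ 1) ∧
      ((exp (-d) * (exp (-d₁) + exp d₁) + exp d * (exp (-d₂) + exp d₂)) - 4) *
          (((exp (-d) * (exp (-d₁) + exp d₁) + exp d * (exp (-d₂) + exp d₂)) - 4) *
              (exp (-d) * (exp (-d₁) + exp d₁) + exp d * (exp (-d₂) + exp d₂)) -
            (exp (-d - d₁) - exp (-d + d₁)) ^ 2 - (exp (d - d₂) - exp (d + d₂)) ^ 2) < 0 := by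
  refine ⟨1/2, 1/20, 0, 9/20, rfl, by norm_num, by norm_num, by norm_num, by norm_num,
    by norm_num, by norm_num, ?_⟩
  have hx0 : (0:ℝ) < exp (1/20) := exp_pos _
  have hx20 : exp (1/20 : ℝ) ^ 20 = exp 1 := by
    rw [← Real.exp_nat_mul]; norm_num
  have hl : (1.05126 : ℝ) ≤ exp (1/20) := by
    have h : (1.05126 : ℝ) ^ 20 < exp (1/20 : ℝ) ^ 20 := by
      rw [hx20]
      calc (1.05126 : ℝ) ^ 20 < 2.7182818283 := by norm_num
        _ < exp 1 := Real.exp_one_gt_d9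
    exact le_of_lt (lt_of_pow_lt_pow_left₀ 20 hx0.le h)
  have hu : exp (1/20 : ℝ) ≤ (1.05128 : ℝ) := by
    have h : exp (1/20 : ℝ) ^ 20 < (1.05128 : ℝ) ^ 20 := by
      rw [hx20]
      calc exp 1 < 2.7182818286 := Real.exp_one_lt_d9
        _ < (1.05128 : ℝ) ^ 20 := by norm_num
    exact le_of_lt (lt_of_pow_lt_pow_left₀ 20 (by norm_num) h)
  have e1 : exp (-(1/20) : ℝ) = (exp (1/20 : ℝ))⁻¹ := by rw [← Real.exp_neg]
  have e9 : exp ((9/20 : ℝ)) = exp (1/20 : ℝ) ^ 9 := by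
    rw [← Real.exp_nat_mul]; norm_num
  have e9' : exp (-(9/20) : ℝ) = (exp (1/20 : ℝ) ^ 9)⁻¹ := by
    rw [← e9, ← Real.exp_neg]
  have em : exp ((1/20 : ℝ) - 9/20) = (exp (1/20 : ℝ) ^ 8)⁻¹ := by
    rw [show ((1/20 : ℝ) - 9/20) = -(((8:ℕ):ℝ) * (1/20)) by norm_num, Real.exp_neg,
      Real.exp_nat_mul]
  have ep : exp ((1/20 : ℝ) + 9/20) = exp (1/20 : ℝ) ^ 10 := by
    rw [show ((1/20 : ℝ) + 9/20) = ((10:ℕ) * (1/20)) by norm_num, Real.exp_nat_mul]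
  have edm : exp (-(1/20 : ℝ) - 0) = (exp (1/20 : ℝ))⁻¹ := by rw [sub_zero]; exact e1
  have edp : exp (-(1/20 : ℝ) + 0) = (exp (1/20 : ℝ))⁻¹ := by rw [add_zero]; exact e1
  rw [edm, edp, e1, e9, e9', em, ep, neg_zero, Real.exp_zero]
  exact aux _ hx0 hl hu
end
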